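/- Let (C, s, ι) be a small category equipped with an endofunctor s and a natural transformation ι : id_C ⇒ s which is braidable, i.e. there exists a natural isomorphism Ψ : s∘s ⟶ s∘s such that ι ∗ id_s = Ψ ∘ (id_s ∗ ι). Let A be an abelian category. Then for any functor T : C → A one has deg(T∘s) ≤ deg(T), with equality if s is essentially surjective on objects. -/

import Mathlib

open CategoryTheory CategoryTheory.Limits

universe v u v' u' w z

variable {A : Type w} [Category.{z} A] [Abelian A]

/-- The natural transformation `T ∗ ι : T ⟶ s ⋙ T` induced by `ι : 𝟭 C ⟶ s`. -/
def stabMap {C : Type u} [Category.{v} C] (s : C ⥤ C) (ι : 𝟭 C ⟶ s) (T : C ⥤ A) :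
    T ⟶ s ⋙ T :=
  T.leftUnitor.inv ≫ Functor.whiskerRight ι T

/-- `degLE s ι d T` means `deg T ≤ d - 1`: `deg T ≤ -1` iff `T = 0`, and
`deg T ≤ d` iff `T = 0` or the cokernel of `T ∗ ι` has degree `≤ d - 1`. -/
def degLE {C : Type u} [Category.{v} C] (s : C ⥤ C) (ι : 𝟭 C ⟶ s) :
    ℕ → (C ⥤ A) → Prop
  | 0, T => IsZero T
  | d + 1, T => IsZero T ∨ degLE s ι d (cokernel (stabMap s ι T))

/-- The degree of a functor `T : C ⥤ A`, relative to the endofunctor `s : C ⥤ C`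
and natural transformation `ι : 𝟭 C ⟶ s`.  The degree takes values in
`{-1, 0, 1, …, ∞}`; we encode such a value `d` as `d + 1 : ℕ∞` (so `-1 ↦ 0`,
`∞ ↦ ⊤`), an order isomorphism, so inequalities and equalities of degrees are
faithfully represented. -/
noncomputable def deg {C : Type u} [Category.{v} C] (s : C ⥤ C) (ι : 𝟭 C ⟶ s)
    (T : C ⥤ A) : ℕ∞ :=
  sInf {e : ℕ∞ | ∃ d : ℕ, e = (d : ℕ∞) ∧ degLE s ι d T}

/-!
Braidability says that the isomorphism `Ψ ∗ T` carries `(s ⋙ T) ∗ ι` to `s ∗ (T ∗ ι)`.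
Since precomposition with `s` is exact, this gives
`coker ((s ⋙ T) ∗ ι) ≅ s ⋙ coker (T ∗ ι)`, and induction on `d` shows that `deg T ≤ d`
implies `deg (s ⋙ T) ≤ d`. If `s` is essentially surjective, `s ⋙ T = 0` forces `T = 0`,
and the same induction gives the converse.
-/

section

variable {C : Type u} [Category.{v} C] (s : C ⥤ C) (ι : 𝟭 C ⟶ s)

lemma degLE_of_iso {d : ℕ} {T₁ T₂ : C ⥤ A} (e : T₁ ≅ T₂) (h : degLE s ι d T₁) :
    degLE s ι d T₂ := by
  induction d generalizing T₁ T₂ with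
  | zero => exact h.of_iso e.symm
  | succ d ih =>
    refine h.imp (fun hT₁ => hT₁.of_iso e.symm) (ih ?_)
    refine cokernel.mapIso _ _ e (Functor.isoWhiskerLeft s e) ?_
    ext c
    simp [stabMap, e.hom.naturality]

lemma deg_le_deg_of_degLE_imp {T T' : C ⥤ A} (h : ∀ d, degLE s ι d T → degLE s ι d T') :
    deg s ι T' ≤ deg s ι T :=
  sInf_le_sInf fun _ ⟨d, hd, hT⟩ => ⟨d, hd, h d hT⟩

lemma stabMap_comp_whiskerRight_braiding {D : Type*} [Category D] (Ψ : s ⋙ s ≅ s ⋙ s)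
    (hΨ : ∀ c : C, s.map (ι.app c) ≫ Ψ.hom.app c = ι.app (s.obj c)) (T : C ⥤ D) :
    stabMap s ι (s ⋙ T) ≫ Functor.whiskerRight Ψ.hom T =
      Functor.whiskerLeft s (stabMap s ι T) := by
  ext c
  simp [stabMap, ← hΨ c]

noncomputable def cokernelStabMapCompIso (Ψ : s ⋙ s ≅ s ⋙ s)
    (hΨ : ∀ c : C, s.map (ι.app c) ≫ Ψ.hom.app c = ι.app (s.obj c)) (T : C ⥤ A) :
    cokernel (stabMap s ι (s ⋙ T)) ≅ s ⋙ cokernel (stabMap s ι T) :=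
  (cokernelCompIsIso _ (Functor.isoWhiskerRight Ψ T).hom).symm ≪≫
    cokernelIsoOfEq (stabMap_comp_whiskerRight_braiding s ι Ψ hΨ T) ≪≫
    (PreservesCokernel.iso ((Functor.whiskeringLeft C C A).obj s) (stabMap s ι T)).symm

lemma degLE_comp (Ψ : s ⋙ s ≅ s ⋙ s)
    (hΨ : ∀ c : C, s.map (ι.app c) ≫ Ψ.hom.app c = ι.app (s.obj c))
    {d : ℕ} {T : C ⥤ A} (h : degLE s ι d T) : degLE s ι d (s ⋙ T) := by
  have comp_isZero (T : C ⥤ A) (hT : IsZero T) : IsZero (s ⋙ T) :=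
    ((Functor.whiskeringLeft C C A).obj s).map_isZero hT
  induction d generalizing T with
  | zero => exact comp_isZero T h
  | succ d ih =>
    exact h.imp (comp_isZero T)
      fun hT => degLE_of_iso s ι (cokernelStabMapCompIso s ι Ψ hΨ T).symm (ih hT)

lemma isZero_of_isZero_comp {C' : Type*} [Category C'] (F : C' ⥤ C) [F.EssSurj] {T : C ⥤ A}
    (h : IsZero (F ⋙ T)) : IsZero T :=
  Functor.isZero _ fun c =>
    ((F ⋙ T).isZero_iff.1 h (F.objPreimage c)).of_iso (T.mapIso (F.objObjPreimageIso c)).symm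

lemma degLE_of_degLE_comp (Ψ : s ⋙ s ≅ s ⋙ s)
    (hΨ : ∀ c : C, s.map (ι.app c) ≫ Ψ.hom.app c = ι.app (s.obj c)) [s.EssSurj]
    {d : ℕ} {T : C ⥤ A} (h : degLE s ι d (s ⋙ T)) : degLE s ι d T := by
  induction d generalizing T with
  | zero => exact isZero_of_isZero_comp s h
  | succ d ih =>
    exact h.imp (isZero_of_isZero_comp s)
      fun hT => ih (degLE_of_iso s ι (cokernelStabMapCompIso s ι Ψ hΨ T) hT)

end

/-- Statement 5: let `(C, s, ι)` be a small category with an endofunctor `s` and a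
natural transformation `ι : 𝟭 C ⟶ s` which is braidable, i.e. there exists a natural
isomorphism `Ψ : s ⋙ s ≅ s ⋙ s` with `ι ∗ id_s = Ψ ∘ (id_s ∗ ι)` (componentwise:
`Ψ_c ∘ s(ι_c) = ι_{s c}`).  Then for any functor `T : C ⥤ A` we have
`deg (T ∘ s) ≤ deg T`, with equality if `s` is essentially surjective on objects. -/
theorem deg_comp_self_le_of_braidable
    {C : Type u} [Category.{v} C] (s : C ⥤ C) (ι : 𝟭 C ⟶ s)
    (hbraidable : ∃ Ψ : s ⋙ s ≅ s ⋙ s,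
      ∀ c : C, s.map (ι.app c) ≫ Ψ.hom.app c = ι.app (s.obj c))
    (T : C ⥤ A) :
    deg s ι (s ⋙ T) ≤ deg s ι T ∧ (s.EssSurj → deg s ι (s ⋙ T) = deg s ι T) := by
  obtain ⟨Ψ, hΨ⟩ := hbraidable
  have deg_comp_le : deg s ι (s ⋙ T) ≤ deg s ι T :=
    deg_le_deg_of_degLE_imp s ι fun _ => degLE_comp s ι Ψ hΨ
  refine ⟨deg_comp_le, fun _ => deg_comp_le.antisymm ?_⟩
  exact deg_le_deg_of_degLE_imp s ι fun _ => degLE_of_degLE_comp s ι Ψ hΨ
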